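/- In the Banach space ℓ1 of absolutely summable real sequences with standard basis vectors (e_n), let A = { (e_m − e_n)/2 : m, n ∈ ℕ, m < n }. Then every sequence (a_i) of elements of A such that, for every continuous linear functional φ on ℓ1, the real sequence (φ(a_i)) converges, is eventually constant; i.e., A contains no non-trivial weakly Cauchy sequence. -/
import Mathlib


open Topology Filter

/-- The Banach space `ℓ¹` of absolutely summable real sequences. -/
abbrev ell1 : Type := lp (fun _ : ℕ => ℝ) 1

/-- The `n`-th standard basis vector of `ℓ¹`. -/
noncomputable def e (n : ℕ) : ell1 := lp.single 1 n (1 : ℝ)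

/-- The set `A = {(e_m - e_n)/2 : m < n}` in `ℓ¹`. -/
noncomputable def A : Set ell1 :=
  {x | ∃ m n : ℕ, m < n ∧ x = (2 : ℝ)⁻¹ • (e m - e n)}

section Aux
open Set


lemma ell1_summable (x : ell1) : Summable (fun k => ‖x k‖) := by
  have := (lp.memℓp x).summable (p := 1) (by norm_num)
  simpa using this

lemma ell1_norm (x : ell1) : ‖x‖ = ∑' k, ‖x k‖ := by
  have := lp.norm_eq_tsum_rpow (p := 1) (by norm_num) x
  simpa using this

lemma ind_summable (S : Set ℕ) (x : ell1) :
    Summable (fun k => S.indicator (fun k => x k) k) := by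
  apply Summable.of_norm
  apply Summable.of_nonneg_of_le (fun k => norm_nonneg _)
    (fun k => norm_indicator_le_norm_self (fun j => x j) k) (ell1_summable x)

noncomputable def phi (S : Set ℕ) : ell1 →L[ℝ] ℝ :=
  LinearMap.mkContinuous
    { toFun := fun x => ∑' k, S.indicator (fun k => x k) k
      map_add' := by
        intro x y
        rw [← Summable.tsum_add (ind_summable S x) (ind_summable S y)]
        refine tsum_congr fun k => ?_
        by_cases h : k ∈ S <;> simp [Set.indicator, h]
      map_smul' := by
        intro c x
        rw [← tsum_const_smul'']
        refine tsum_congr fun k => ?_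
        by_cases h : k ∈ S <;> simp [Set.indicator, h] }
    1
    (by
      intro x
      simp only [LinearMap.coe_mk, AddHom.coe_mk, one_mul]
      calc ‖∑' k, S.indicator (fun k => x k) k‖ ≤ ∑' k, ‖x k‖ := by
            apply tsum_of_norm_bounded (g := fun k => ‖x k‖) ((ell1_summable x).hasSum)
            intro k; exact norm_indicator_le_norm_self (fun j => x j) k
        _ = ‖x‖ := (ell1_norm x).symm)


open Classical in
noncomputable def chi (S : Set ℕ) (k : ℕ) : ℝ := if k ∈ S then 1 else 0

lemma chi_mem (S : Set ℕ) (k : ℕ) : chi S k = 0 ∨ chi S k = 1 := by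
  unfold chi; split <;> simp

lemma chi_of_mem {S : Set ℕ} {k : ℕ} (h : k ∈ S) : chi S k = 1 := by
  unfold chi; simp [h]

lemma chi_of_not_mem {S : Set ℕ} {k : ℕ} (h : k ∉ S) : chi S k = 0 := by
  unfold chi; simp [h]

open Classical in
lemma phi_e (S : Set ℕ) (n : ℕ) : phi S (e n) = chi S n := by
  have h : ∀ k, S.indicator (fun k => (e n : ∀ _:ℕ, ℝ) k) k
      = if k = n then chi S n else 0 := by
    intro k
    by_cases hkn : k = n
    · subst hkn
      by_cases hk : k ∈ S <;> simp [Set.indicator, chi, hk, e, lp.single_apply_self]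
    · simp [Set.indicator, e, lp.single_apply_ne _ _ _ hkn, hkn]
  show (∑' k, S.indicator (fun k => (e n : ∀ _:ℕ, ℝ) k) k) = _
  rw [tsum_congr h, tsum_eq_single n (by intro b hb; simp [hb])]
  simp

lemma phi_pair (S : Set ℕ) (p q : ℕ) :
    phi S ((2 : ℝ)⁻¹ • (e p - e q)) = 2⁻¹ * (chi S p - chi S q) := by
  rw [map_smul, map_sub, phi_e, phi_e, smul_eq_mul]

lemma ev_const {v : ℕ → ℝ} (hv : ∃ L, Tendsto v atTop (𝓝 L))
    (hval : ∀ i, v i = -1 ∨ v i = 0 ∨ v i = 1) : ∃ c N, ∀ i ≥ N, v i = c := by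
  obtain ⟨L, hL⟩ := hv
  obtain ⟨N, hN⟩ := (Metric.tendsto_atTop.1 hL) (1/2) (by norm_num)
  refine ⟨v N, N, fun i hi => ?_⟩
  have h1 := hN i hi
  have h2 := hN N le_rfl
  rw [Real.dist_eq] at h1 h2
  have h3 : |v i - v N| < 1 := by
    calc |v i - v N| ≤ |v i - L| + |v N - L| := abs_sub_le _ _ _ |>.trans (by rw [abs_sub_comm (v N) L])
      _ < 1 := by linarith
  rcases hval i with h|h|h <;> rcases hval N with h'|h'|h' <;>
    rw [h, h'] at h3 ⊢ <;> first | rfl | (exfalso; rw [abs_lt] at h3; norm_num at h3)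

lemma not_two_values {v : ℕ → ℝ} (hv : ∃ c N, ∀ i ≥ N, v i = c) {x y : ℝ} (hxy : x ≠ y)
    (hx : ∀ t, ∃ i ≥ t, v i = x) (hy : ∀ t, ∃ i ≥ t, v i = y) : False := by
  obtain ⟨c, N, hc⟩ := hv
  obtain ⟨i, hi, hvi⟩ := hx N
  obtain ⟨j, hj, hvj⟩ := hy N
  apply hxy
  rw [← hvi, ← hvj, hc i hi, hc j hj]

lemma escape {f : ℕ → ℕ} (h : ∀ k, ∃ N, ∀ i ≥ N, f i ≠ k) :
    ∀ B, ∃ N, ∀ i ≥ N, B ≤ f i := by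
  intro B
  induction B with
  | zero => exact ⟨0, fun i _ => Nat.zero_le _⟩
  | succ B ih =>
    obtain ⟨N, hN⟩ := ih
    obtain ⟨N', hN'⟩ := h B
    refine ⟨max N N', fun i hi => ?_⟩
    have := hN i (le_trans (le_max_left _ _) hi)
    have := hN' i (le_trans (le_max_right _ _) hi)
    omega



end Aux

open Set in
theorem stmt_13 (a : ℕ → ell1) (ha : ∀ i, a i ∈ A)
    (hCauchy : ∀ φ : ell1 →L[ℝ] ℝ, ∃ L : ℝ, Tendsto (fun i => φ (a i)) atTop (𝓝 L)) :
    ∃ n : ℕ, ∀ i ≥ n, a i = a n := by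
  simp only [A, Set.mem_setOf_eq] at ha
  choose m n hlt hrep using ha
  -- eventual constancy of the indicator differences
  have hD : ∀ S : Set ℕ, ∃ c N, ∀ i ≥ N, chi S (m i) - chi S (n i) = c := by
    intro S
    obtain ⟨L, hL⟩ := hCauchy (phi S)
    apply ev_const
    · refine ⟨2 * L, ?_⟩
      have h2 : Tendsto (fun i => 2 * phi S (a i)) atTop (𝓝 (2 * L)) := hL.const_mul 2
      refine h2.congr fun i => ?_
      rw [hrep i, phi_pair]; ring
    · intro i
      rcases chi_mem S (m i) with h|h <;> rcases chi_mem S (n i) with h'|h' <;>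
        rw [h, h'] <;> norm_num
  -- per-coordinate eventual constancy
  have hmk : ∀ k, (∃ N, ∀ i ≥ N, m i = k) ∨ (∃ N, ∀ i ≥ N, m i ≠ k) := by
    intro k
    obtain ⟨c, N, hc⟩ := hD {k}
    by_cases hc1 : c = 1
    · left; refine ⟨N, fun i hi => ?_⟩
      by_contra h
      have h1 : chi {k} (m i) = 0 := chi_of_not_mem h
      have := hc i hi
      rcases chi_mem {k} (n i) with h'|h' <;> rw [h1, h'] at this <;>
        rw [← this] at hc1 <;> norm_num at hc1
    · right; refine ⟨N, fun i hi => ?_⟩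
      intro h
      have h1 : chi {k} (m i) = 1 := chi_of_mem h
      have h2 : chi {k} (n i) = 0 := chi_of_not_mem (by
        intro h'
        have h'' : n i = k := h'
        have := hlt i
        omega)
      have := hc i hi
      rw [h1, h2] at this
      exact hc1 (by linarith)
  have hnk : ∀ k, (∃ N, ∀ i ≥ N, n i = k) ∨ (∃ N, ∀ i ≥ N, n i ≠ k) := by
    intro k
    obtain ⟨c, N, hc⟩ := hD {k}
    by_cases hc1 : c = -1
    · left; refine ⟨N, fun i hi => ?_⟩
      by_contra h
      have h1 : chi {k} (n i) = 0 := chi_of_not_mem h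
      have := hc i hi
      rcases chi_mem {k} (m i) with h'|h' <;> rw [h1, h'] at this <;>
        rw [← this] at hc1 <;> norm_num at hc1
    · right; refine ⟨N, fun i hi => ?_⟩
      intro h
      have h1 : chi {k} (n i) = 1 := chi_of_mem h
      have h2 : chi {k} (m i) = 0 := chi_of_not_mem (by
        intro h'
        have h'' : m i = k := h'
        have := hlt i
        omega)
      have := hc i hi
      rw [h1, h2] at this
      exact hc1 (by linarith)
  by_cases hK : ∃ K N, ∀ i ≥ N, n i = K
  · obtain ⟨K, N1, hN1⟩ := hK
    by_cases hM : ∃ M N, ∀ i ≥ N, m i = M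
    · obtain ⟨M, N2, hN2⟩ := hM
      refine ⟨max N1 N2, fun i hi => ?_⟩
      rw [hrep i, hrep (max N1 N2),
        hN1 i (le_trans (le_max_left _ _) hi), hN1 (max N1 N2) (le_max_left _ _),
        hN2 i (le_trans (le_max_right _ _) hi), hN2 (max N1 N2) (le_max_right _ _)]
    · exfalso
      push_neg at hM
      have hm' : ∀ k, ∃ N, ∀ i ≥ N, m i ≠ k := by
        intro k
        rcases hmk k with ⟨N, hN⟩|h
        · obtain ⟨i, hi, hne⟩ := hM k N
          exact absurd (hN i hi) hne
        · exact h
      obtain ⟨N2, hN2⟩ := escape hm' K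
      have h1 := hN1 (max N1 N2) (le_max_left _ _)
      have h2 := hN2 (max N1 N2) (le_max_right _ _)
      have := hlt (max N1 N2)
      omega
  · exfalso
    push_neg at hK
    have hn' : ∀ k, ∃ N, ∀ i ≥ N, n i ≠ k := by
      intro k
      rcases hnk k with ⟨N, hN⟩|h
      · obtain ⟨i, hi, hne⟩ := hK k N
        exact absurd (hN i hi) hne
      · exact h
    have keyn : ∀ N B, ∃ i, N ≤ i ∧ B ≤ n i := by
      intro N B
      obtain ⟨N', hN'⟩ := escape hn' B
      exact ⟨max N N', le_max_left _ _, hN' _ (le_max_right _ _)⟩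
    by_cases hM : ∃ M N, ∀ i ≥ N, m i = M
    · -- m eventually constant M, n → ∞
      obtain ⟨M, NM, hNM⟩ := hM
      set g : ℕ → ℕ := fun t => Nat.rec (Classical.choose (keyn 0 (M+1)))
        (fun _ prev => Classical.choose (keyn (prev+1) (n prev + 1))) t with hg
      have hg0 : M + 1 ≤ n (g 0) := (Classical.choose_spec (keyn 0 (M+1))).2
      have hgs : ∀ t, g t + 1 ≤ g (t+1) ∧ n (g t) + 1 ≤ n (g (t+1)) := by
        intro t
        exact Classical.choose_spec (keyn (g t + 1) (n (g t) + 1))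
      have hgmono : StrictMono g := strictMono_nat_of_lt_succ (fun t => (hgs t).1)
      have hnmono : StrictMono (fun t => n (g t)) :=
        strictMono_nat_of_lt_succ (fun t => (hgs t).2)
      have hngtM : ∀ t, M < n (g t) := by
        intro t
        induction t with
        | zero => omega
        | succ t ih => have := (hgs t).2; omega
      set S : Set ℕ := Set.range (fun t => n (g (2*t))) with hS
      have hMS : M ∉ S := by
        rintro ⟨t, ht⟩
        exact absurd ht.symm (Nat.ne_of_lt (hngtM (2*t)))
      have hnS : ∀ s, (n (g s) ∈ S ↔ Even s) := by
        intro s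
        constructor
        · rintro ⟨t, ht⟩
          have h2 : (fun r => n (g r)) (2*t) = (fun r => n (g r)) s := ht
          have : 2*t = s := by
            rcases lt_trichotomy (2*t) s with h|h|h
            · exact absurd h2 (ne_of_lt (hnmono h))
            · exact h
            · exact absurd h2.symm (ne_of_lt (hnmono h))
          exact ⟨t, by omega⟩
        · rintro ⟨t, ht⟩
          exact ⟨t, congrArg (fun r => n (g r)) (show 2*t = s by omega)⟩
      apply not_two_values (hD S) (x := -1) (y := 0) (by norm_num)
      · intro t
        refine ⟨g (2*(t + NM)), ?_, ?_⟩
        · have := hgmono.le_apply (x := 2*(t+NM)); omega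
        · have hmi : m (g (2*(t+NM))) = M := by
            apply hNM
            have := hgmono.le_apply (x := 2*(t+NM)); omega
          rw [hmi, chi_of_not_mem hMS, chi_of_mem ((hnS _).2 ⟨t + NM, by omega⟩)]
          norm_num
      · intro t
        refine ⟨g (2*(t + NM)+1), ?_, ?_⟩
        · have := hgmono.le_apply (x := 2*(t+NM)+1); omega
        · have hmi : m (g (2*(t+NM)+1)) = M := by
            apply hNM
            have := hgmono.le_apply (x := 2*(t+NM)+1); omega
          have hodd : ¬ Even (2*(t+NM)+1) := by rintro ⟨r, hr⟩; omega
          rw [hmi, chi_of_not_mem hMS, chi_of_not_mem (fun h => hodd ((hnS _).1 h))]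
          norm_num
    · -- m → ∞
      push_neg at hM
      have hm' : ∀ k, ∃ N, ∀ i ≥ N, m i ≠ k := by
        intro k
        rcases hmk k with ⟨N, hN⟩|h
        · obtain ⟨i, hi, hne⟩ := hM k N
          exact absurd (hN i hi) hne
        · exact h
      have keym : ∀ N B, ∃ i, N ≤ i ∧ B ≤ m i := by
        intro N B
        obtain ⟨N', hN'⟩ := escape hm' B
        exact ⟨max N N', le_max_left _ _, hN' _ (le_max_right _ _)⟩
      set g : ℕ → ℕ := fun t => Nat.rec 0
        (fun _ prev => Classical.choose (keym (prev+1) (n prev + 1))) t with hg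
      have hgs : ∀ t, g t + 1 ≤ g (t+1) ∧ n (g t) + 1 ≤ m (g (t+1)) := by
        intro t
        exact Classical.choose_spec (keym (g t + 1) (n (g t) + 1))
      have hgmono : StrictMono g := strictMono_nat_of_lt_succ (fun t => (hgs t).1)
      have hmmono : StrictMono (fun t => m (g t)) :=
        strictMono_nat_of_lt_succ (fun t => by
          have h1 := (hgs t).2
          have h2 := hlt (g t)
          omega)
      have hsep : ∀ s t, n (g s) ≠ m (g t) := by
        intro s t
        rcases le_or_gt t s with h|h
        · have h1 : m (g t) ≤ m (g s) := hmmono.monotone h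
          have h2 := hlt (g s)
          omega
        · have h1 : m (g (s+1)) ≤ m (g t) := hmmono.monotone h
          have h2 := (hgs s).2
          omega
      set S : Set ℕ := Set.range (fun t => m (g (2*t))) with hS
      have hnS : ∀ s, n (g s) ∉ S := by
        rintro s ⟨t, ht⟩
        exact hsep s (2*t) ht.symm
      have hmS : ∀ s, (m (g s) ∈ S ↔ Even s) := by
        intro s
        constructor
        · rintro ⟨t, ht⟩
          have h2 : (fun r => m (g r)) (2*t) = (fun r => m (g r)) s := ht
          have : 2*t = s := by
            rcases lt_trichotomy (2*t) s with h|h|h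
            · exact absurd h2 (ne_of_lt (hmmono h))
            · exact h
            · exact absurd h2.symm (ne_of_lt (hmmono h))
          exact ⟨t, by omega⟩
        · rintro ⟨t, ht⟩
          exact ⟨t, congrArg (fun r => m (g r)) (show 2*t = s by omega)⟩
      apply not_two_values (hD S) (x := 1) (y := 0) (by norm_num)
      · intro t
        refine ⟨g (2*t), le_trans (show t ≤ 2*t by omega) hgmono.le_apply, ?_⟩
        rw [chi_of_mem ((hmS _).2 ⟨t, by omega⟩), chi_of_not_mem (hnS (2*t))]
        norm_num
      · intro t
        refine ⟨g (2*t+1), le_trans (show t ≤ 2*t+1 by omega) hgmono.le_apply, ?_⟩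
        have hodd : ¬ Even (2*t+1) := by rintro ⟨r, hr⟩; omega
        rw [chi_of_not_mem (fun h => hodd ((hmS _).1 h)), chi_of_not_mem (hnS (2*t+1))]
        norm_num
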